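/- arXiv:1302.1020 — 2 statements merged into one kernel-verified Lean document; each statement's English description precedes it below -/
import Mathlib

section
/- (Converse, Proposition 1.) Let P_Y be a binary target distribution. Suppose a sequence of (possibly randomized) encoder–decoder pairs {(f_n, φ_n)} with input lengths m = m(n) satisfies, as n → ∞: (1) m/n → R, (2) D(P_{Ỹ^n} ‖ P_Y^n)/n → 0, and (3) P(φ_n(Ỹ^n) ≠ B^m) → 0, where B^m is uniform on {0,1}^m and Ỹ^n is the encoder output. Then R ≤ H(P_Y). -/
open Filter

/-- Binary entropy (in bits) of a binary distribution with `P_Y(1) = p`, `P_Y(0) = 1 - p`. -/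
noncomputable def binEnt (p : ℝ) : ℝ :=
  -(p * Real.logb 2 p) - (1 - p) * Real.logb 2 (1 - p)

/-- The `n`-fold product distribution `P_Y^n` on `{0,1}^n`, where `P_Y(1) = p`. -/
noncomputable def prodP (p : ℝ) {n : ℕ} (y : Fin n → Bool) : ℝ :=
  ∏ i, (if y i then p else 1 - p)

/- ### Auxiliary lemmas -/

lemma aux_gibbs_pt {x y : ℝ} (hx : 0 ≤ x) (hy : 0 < y) :
    x - y ≤ x * Real.log (x / y) := by
  rcases eq_or_lt_of_le hx with h | h
  · simp [← h]; linarith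
  · have h1 : Real.log (y / x) ≤ y / x - 1 := Real.log_le_sub_one_of_pos (by positivity)
    have h2 : Real.log (y / x) = -Real.log (x / y) := by
      rw [← Real.log_inv]; congr 1; field_simp
    have h3 : 1 - y / x ≤ Real.log (x / y) := by linarith
    have h4 := mul_le_mul_of_nonneg_left h3 h.le
    have h5 : x * (1 - y / x) = x - y := by field_simp
    linarith

lemma aux_xlogx {x : ℝ} (hx : 0 ≤ x) : x - 1 ≤ x * Real.log x := by
  have := aux_gibbs_pt hx one_pos
  simpa using this

lemma aux_grouping {ι : Type*} (A : Finset ι) (P Q : ι → ℝ)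
    (hP : ∀ y ∈ A, 0 ≤ P y) (hQ : ∀ y ∈ A, 0 < Q y) :
    (∑ y ∈ A, P y) * Real.log ((∑ y ∈ A, P y) / (∑ y ∈ A, Q y)) ≤
      ∑ y ∈ A, P y * Real.log (P y / Q y) := by
  set α := ∑ y ∈ A, P y with hα
  set β := ∑ y ∈ A, Q y with hβ
  have hα0 : 0 ≤ α := Finset.sum_nonneg hP
  rcases eq_or_lt_of_le hα0 with h0 | h0
  · have hz : ∀ y ∈ A, P y = 0 := by
      intro y hy
      exact (Finset.sum_eq_zero_iff_of_nonneg hP).mp h0.symm y hy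
    rw [← h0]
    have : ∑ y ∈ A, P y * Real.log (P y / Q y) = 0 :=
      Finset.sum_eq_zero fun y hy => by simp [hz y hy]
    simp [this]
  · have hAne : A.Nonempty := by
      by_contra hA
      rw [Finset.not_nonempty_iff_eq_empty] at hA
      simp [hα, hA] at h0
    have hβ0 : 0 < β := Finset.sum_pos hQ hAne
    set t := α / β with ht
    have ht0 : 0 < t := div_pos h0 hβ0
    have key : ∀ y ∈ A, P y - Q y * t ≤ P y * Real.log (P y / Q y) - P y * Real.log t := by
      intro y hy
      have h1 := aux_gibbs_pt (hP y hy) (mul_pos (hQ y hy) ht0)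
      have h2 : P y * Real.log (P y / (Q y * t)) =
          P y * Real.log (P y / Q y) - P y * Real.log t := by
        by_cases hz : P y = 0
        · simp [hz]
        · have hPy : 0 < P y := lt_of_le_of_ne (hP y hy) (Ne.symm hz)
          rw [div_mul_eq_div_div,
            Real.log_div (div_ne_zero (ne_of_gt hPy) (ne_of_gt (hQ y hy))) (ne_of_gt ht0)]
          ring
      linarith [h1, h2.symm.le]
    have hsum := Finset.sum_le_sum key
    rw [Finset.sum_sub_distrib, Finset.sum_sub_distrib, ← Finset.sum_mul, ← Finset.sum_mul,
      ← hα, ← hβ] at hsum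
    have hβt : β * t = α := by rw [ht]; field_simp [hβ0.ne']
    have hlt : Real.log t = Real.log (α / β) := by rw [ht]
    linarith [hsum]

lemma aux_div_lb {ι : Type*} [Fintype ι] [DecidableEq ι] (P Q : ι → ℝ)
    (hP : ∀ y, 0 ≤ P y) (hQ : ∀ y, 0 < Q y)
    (hPs : ∑ y, P y = 1) (hQs : ∑ y, Q y = 1) (A : Finset ι) :
    (∑ y ∈ A, P y) * (-Real.log (∑ y ∈ A, Q y)) - 1 ≤ ∑ y, P y * Real.log (P y / Q y) := by
  set α := ∑ y ∈ A, P y with hα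
  set β := ∑ y ∈ A, Q y with hβ
  have hα0 : 0 ≤ α := Finset.sum_nonneg fun y _ => hP y
  have hall : (0:ℝ) ≤ ∑ y, P y * Real.log (P y / Q y) := by
    have h := Finset.sum_le_sum (fun y (_ : y ∈ Finset.univ) => aux_gibbs_pt (hP y) (hQ y))
    rw [Finset.sum_sub_distrib, hPs, hQs] at h
    simpa using h
  rcases eq_or_lt_of_le hα0 with h0 | h0
  · rw [← h0]; simp; linarith
  · have hsplit : ∑ y, P y * Real.log (P y / Q y) =
        (∑ y ∈ A, P y * Real.log (P y / Q y)) + ∑ y ∈ Aᶜ, P y * Real.log (P y / Q y) :=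
      (Finset.sum_add_sum_compl A _).symm
    have hgA : α * Real.log (α / β) ≤ ∑ y ∈ A, P y * Real.log (P y / Q y) :=
      aux_grouping A P Q (fun y _ => hP y) (fun y _ => hQ y)
    have hgAc : (∑ y ∈ Aᶜ, P y) - (∑ y ∈ Aᶜ, Q y) ≤ ∑ y ∈ Aᶜ, P y * Real.log (P y / Q y) := by
      rw [← Finset.sum_sub_distrib]
      exact Finset.sum_le_sum fun y _ => aux_gibbs_pt (hP y) (hQ y)
    have hPc : ∑ y ∈ Aᶜ, P y = 1 - α := by
      have := Finset.sum_add_sum_compl A P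
      rw [hPs] at this; linarith
    have hQc : ∑ y ∈ Aᶜ, Q y = 1 - β := by
      have := Finset.sum_add_sum_compl A Q
      rw [hQs] at this; linarith
    have hAne : A.Nonempty := by
      by_contra hA
      rw [Finset.not_nonempty_iff_eq_empty] at hA
      simp [hα, hA] at h0
    have hβ0 : 0 < β := Finset.sum_pos (fun y _ => hQ y) hAne
    have hlog : α * Real.log (α / β) = α * Real.log α + α * (-Real.log β) := by
      rw [Real.log_div (ne_of_gt h0) (ne_of_gt hβ0)]; ring
    have hx := aux_xlogx hα0
    have hβ1 : β ≤ 1 := by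
      have h1 : 0 ≤ ∑ y ∈ Aᶜ, Q y := Finset.sum_nonneg fun y _ => (hQ y).le
      rw [hQc] at h1; linarith
    rw [hsplit]
    rw [hPc, hQc] at hgAc
    linarith

lemma aux_exists_chernoff (p a b c : ℝ) (hp0 : 0 < p) (hp1 : p < 1)
    (hmean : p * a + (1 - p) * b < c) :
    ∃ s : ℝ, 0 < s ∧ p * Real.exp (s * (a - c)) + (1 - p) * Real.exp (s * (b - c)) < 1 := by
  set g := fun s : ℝ => p * Real.exp (s * (a - c)) + (1 - p) * Real.exp (s * (b - c)) with hg
  have hg0 : g 0 = 1 := by simp [hg]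
  have hd : HasDerivAt g (p * (a - c) + (1 - p) * (b - c)) 0 := by
    have h1 : HasDerivAt (fun s : ℝ => Real.exp (s * (a - c))) (a - c) 0 := by
      have := ((hasDerivAt_mul_const (a - c) : HasDerivAt (fun x : ℝ => x * (a - c)) (a - c) 0)).exp
      simpa using this
    have h2 : HasDerivAt (fun s : ℝ => Real.exp (s * (b - c))) (b - c) 0 := by
      have := ((hasDerivAt_mul_const (b - c) : HasDerivAt (fun x : ℝ => x * (b - c)) (b - c) 0)).exp
      simpa using this
    exact (h1.const_mul p).add (h2.const_mul (1 - p))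
  have hdneg : p * (a - c) + (1 - p) * (b - c) < 0 := by nlinarith
  have hslope := hasDerivAt_iff_tendsto_slope.mp hd
  have hsl2 : Tendsto (slope g 0) (nhdsWithin 0 (Set.Ioi 0))
      (nhds (p * (a - c) + (1 - p) * (b - c))) :=
    hslope.mono_left (nhdsWithin_mono 0 (fun x hx => ne_of_gt hx))
  have hev : ∀ᶠ s in nhdsWithin 0 (Set.Ioi 0), slope g 0 s < 0 :=
    hsl2.eventually_lt_const hdneg
  obtain ⟨s, h1, h2⟩ := (hev.and (eventually_mem_nhdsWithin)).exists
  refine ⟨s, h2, ?_⟩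
  show g s < 1
  have heq : slope g 0 s = (g s - 1) / s := by rw [slope_def_field, hg0]; ring_nf
  rw [heq] at h1
  rcases div_neg_iff.mp h1 with ⟨ha, hb⟩ | ⟨ha, hb⟩
  · exact absurd (Set.mem_Ioi.mp h2) (not_lt.mpr hb.le)
  · linarith

lemma aux_sum_prod_bool (n : ℕ) (w : Bool → ℝ) :
    ∑ y : Fin n → Bool, ∏ i, w (y i) = (w true + w false) ^ n := by
  have h := Finset.prod_univ_sum (fun _ : Fin n => (Finset.univ : Finset Bool)) (fun _ j => w j)
  rw [Fintype.piFinset_univ] at h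
  rw [← h, Finset.prod_const]
  simp [Finset.card_univ]

lemma prodP_pos {p : ℝ} (hp0 : 0 < p) (hp1 : p < 1) {n : ℕ} (y : Fin n → Bool) :
    0 < prodP p y := by
  unfold prodP
  apply Finset.prod_pos
  intro i _
  by_cases h : y i <;> simp [h] <;> linarith

lemma prodP_sum_one {p : ℝ} {n : ℕ} :
    ∑ y : Fin n → Bool, prodP p y = 1 := by
  unfold prodP
  rw [aux_sum_prod_bool n (fun t => if t then p else 1 - p)]
  norm_num

lemma prodP_eq_exp {p : ℝ} (hp0 : 0 < p) (hp1 : p < 1) {n : ℕ} (y : Fin n → Bool) :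
    prodP p y = Real.exp (-(∑ i, (if y i then -Real.log p else -Real.log (1 - p)))) := by
  unfold prodP
  rw [← Finset.sum_neg_distrib, Real.exp_sum]
  apply Finset.prod_congr rfl
  intro i _
  by_cases h : y i <;> simp [h]
  · rw [Real.exp_log hp0]
  · rw [Real.exp_log (by linarith)]

lemma aux_chernoff_bound {p : ℝ} (hp0 : 0 < p) (hp1 : p < 1) (c s : ℝ) (hs : 0 < s) (n : ℕ) :
    ∑ y ∈ Finset.univ.filter (fun y : Fin n → Bool =>
        (n : ℝ) * c < ∑ i, (if y i then -Real.log p else -Real.log (1 - p))),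
      prodP p y ≤
    (p * Real.exp (s * (-Real.log p - c)) +
      (1 - p) * Real.exp (s * (-Real.log (1 - p) - c))) ^ n := by
  set a := -Real.log p with ha
  set b := -Real.log (1 - p) with hb
  set w : Bool → ℝ := fun t => (if t then p else 1 - p) * Real.exp (s * ((if t then a else b) - c))
    with hw
  have hw0 : ∀ t, 0 ≤ w t := by
    intro t
    by_cases h : t <;> simp [hw, h]
    · positivity
    · have h1 : (0:ℝ) ≤ 1 - p := by linarith
      positivity
  have step1 : ∀ y ∈ Finset.univ.filter (fun y : Fin n → Bool =>
      (n : ℝ) * c < ∑ i, (if y i then a else b)), prodP p y ≤ ∏ i, w (y i) := by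
    intro y hy
    rw [Finset.mem_filter] at hy
    have hℓ := hy.2
    have hexp : ∑ i : Fin n, s * ((if y i then a else b) - c) =
        s * ((∑ i, if y i then a else b) - n * c) := by
      rw [← Finset.mul_sum, Finset.sum_sub_distrib, Finset.sum_const, Finset.card_univ,
        Fintype.card_fin]
      simp [nsmul_eq_mul]
    have hprod : ∏ i, w (y i) =
        prodP p y * Real.exp (s * ((∑ i, if y i then a else b) - n * c)) := by
      unfold prodP
      simp only [hw]
      rw [Finset.prod_mul_distrib, ← Real.exp_sum, hexp]
    rw [hprod]
    have h1 : (1:ℝ) ≤ Real.exp (s * ((∑ i, if y i then a else b) - n * c)) :=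
      Real.one_le_exp (by nlinarith)
    exact le_mul_of_one_le_right (prodP_pos hp0 hp1 y).le h1
  calc ∑ y ∈ Finset.univ.filter (fun y : Fin n → Bool =>
        (n : ℝ) * c < ∑ i, (if y i then a else b)), prodP p y
      ≤ ∑ y ∈ Finset.univ.filter (fun y : Fin n → Bool =>
        (n : ℝ) * c < ∑ i, (if y i then a else b)), ∏ i, w (y i) := Finset.sum_le_sum step1
    _ ≤ ∑ y : Fin n → Bool, ∏ i, w (y i) := by
        apply Finset.sum_le_sum_of_subset_of_nonneg (Finset.filter_subset _ _)
        intro y _ _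
        exact Finset.prod_nonneg fun i _ => hw0 (y i)
    _ = (w true + w false) ^ n := aux_sum_prod_bool n w
    _ = (p * Real.exp (s * (a - c)) + (1 - p) * Real.exp (s * (b - c))) ^ n := by simp [hw]

/-- **Converse (Proposition 1).** Let `P_Y` be a binary target distribution
(`P_Y(1) = p`, `0 < p < 1`).  Suppose a sequence of (possibly randomized)
encoder–decoder pairs `(f n, φ n)` with input lengths `m n` — the encoder being a
stochastic kernel `f n : {0,1}^{m n} → ({0,1}^n → ℝ)` with nonnegative rows summing
to one — satisfies, as `n → ∞`: (1) `m n / n → R`, (2) the normalized informational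
divergence of the output distribution `P_{Ỹ^n}(y) = 2^{-m} ∑_b f n b y` from `P_Y^n`
tends to `0`, and (3) the probability of erroneous decoding (under uniform input
`B^m`) tends to `0`.  Then `R ≤ H(P_Y)`. -/
theorem converse_max_matching_rate
    (p : ℝ) (hp0 : 0 < p) (hp1 : p < 1) (R : ℝ)
    (m : ℕ → ℕ)
    (f : ∀ n, (Fin (m n) → Bool) → (Fin n → Bool) → ℝ)
    (φ : ∀ n, (Fin n → Bool) → (Fin (m n) → Bool))
    (hf0 : ∀ n b y, 0 ≤ f n b y)
    (hf1 : ∀ n b, ∑ y : Fin n → Bool, f n b y = 1)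
    (hrate : Tendsto (fun n => (m n : ℝ) / n) atTop (nhds R))
    (hdiv : Tendsto (fun n =>
        (∑ y : Fin n → Bool,
          (((2 : ℝ) ^ m n)⁻¹ * ∑ b : Fin (m n) → Bool, f n b y) *
            Real.logb 2
              ((((2 : ℝ) ^ m n)⁻¹ * ∑ b : Fin (m n) → Bool, f n b y) / prodP p y)) / n)
      atTop (nhds 0))
    (herr : Tendsto (fun n =>
        ((2 : ℝ) ^ m n)⁻¹ *
          ∑ b : Fin (m n) → Bool, ∑ y : Fin n → Bool,
            (if φ n y = b then 0 else f n b y))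
      atTop (nhds 0)) :
    R ≤ binEnt p := by
  by_contra hRgt
  push_neg at hRgt
  have hlog2 : (0:ℝ) < Real.log 2 := Real.log_pos one_lt_two
  have h1p : (0:ℝ) < 1 - p := by linarith
  set H := binEnt p with hH
  set ε := (R - H) / 2 with hε
  have hε0 : 0 < ε := by rw [hε]; linarith
  set la := -Real.log p with hla
  set lb := -Real.log (1 - p) with hlb
  set c := (H + ε) * Real.log 2 with hc
  have hHa : p * la + (1 - p) * lb = H * Real.log 2 := by
    rw [hla, hlb, hH]
    unfold binEnt
    rw [Real.logb, Real.logb]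
    field_simp
    ring
  have hmean : p * la + (1 - p) * lb < c := by
    rw [hHa, hc]
    nlinarith
  obtain ⟨s, hs0, hρlt⟩ := aux_exists_chernoff p la lb c hp0 hp1 hmean
  set ρ := p * Real.exp (s * (la - c)) + (1 - p) * Real.exp (s * (lb - c)) with hρ
  have hρ0 : 0 < ρ := by rw [hρ]; positivity
  set δ := -Real.log ρ with hδ
  have hδ0 : 0 < δ := by
    rw [hδ]
    have := Real.log_neg hρ0 hρlt
    linarith
  -- probability notation
  set P : ∀ n, (Fin n → Bool) → ℝ :=
    fun n y => ((2 : ℝ) ^ m n)⁻¹ * ∑ b : Fin (m n) → Bool, f n b y with hP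
  have hP0 : ∀ n y, 0 ≤ P n y := by
    intro n y
    apply mul_nonneg (by positivity)
    exact Finset.sum_nonneg fun b _ => hf0 n b y
  have hcard : ∀ n : ℕ, (Finset.univ : Finset (Fin (m n) → Bool)).card = 2 ^ m n := by
    intro n
    simp [Finset.card_univ]
  have hPsum : ∀ n, ∑ y : Fin n → Bool, P n y = 1 := by
    intro n
    rw [hP, ← Finset.mul_sum, Finset.sum_comm]
    have : ∀ b : Fin (m n) → Bool, ∑ y : Fin n → Bool, f n b y = 1 := hf1 n
    rw [Finset.sum_congr rfl fun b _ => this b, Finset.sum_const, hcard n]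
    simp
  -- the atypical set
  set A : ∀ n : ℕ, Finset (Fin n → Bool) := fun n => Finset.univ.filter
    (fun y : Fin n → Bool => (n : ℝ) * c < ∑ i, (if y i then la else lb)) with hA
  set α : ℕ → ℝ := fun n => ∑ y ∈ A n, P n y with hα
  have hα0 : ∀ n, 0 ≤ α n := fun n => Finset.sum_nonneg fun y _ => hP0 n y
  set Dn : ℕ → ℝ := fun n => ∑ y : Fin n → Bool, P n y * Real.log (P n y / prodP p y) with hDn
  -- divergence bound on α
  have hβρ : ∀ n, ∑ y ∈ A n, prodP p y ≤ ρ ^ n := by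
    intro n
    rw [hA, hρ, hla, hlb]
    exact aux_chernoff_bound hp0 hp1 c s hs0 n
  have hDlb : ∀ n, α n * ((n : ℝ) * δ) - 1 ≤ Dn n := by
    intro n
    have hdb := aux_div_lb (P n) (prodP p) (hP0 n) (prodP_pos hp0 hp1) (hPsum n)
      prodP_sum_one (A n)
    by_cases hAe : (A n) = ∅
    · have : α n = 0 := by rw [hα]; simp [hAe]
      rw [this]
      have hDn0 : (0:ℝ) ≤ Dn n := by
        have h := Finset.sum_le_sum
          (fun y (_ : y ∈ (Finset.univ : Finset (Fin n → Bool))) =>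
            aux_gibbs_pt (hP0 n y) (prodP_pos hp0 hp1 y))
        rw [Finset.sum_sub_distrib, hPsum n, prodP_sum_one] at h
        simpa [hDn] using h
      linarith
    · have hAne : (A n).Nonempty := Finset.nonempty_iff_ne_empty.mpr hAe
      have hβ0 : 0 < ∑ y ∈ A n, prodP p y :=
        Finset.sum_pos (fun y _ => prodP_pos hp0 hp1 y) hAne
      have hlogβ : Real.log (∑ y ∈ A n, prodP p y) ≤ (n : ℝ) * Real.log ρ := by
        calc Real.log (∑ y ∈ A n, prodP p y) ≤ Real.log (ρ ^ n) :=
              Real.log_le_log hβ0 (hβρ n)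
          _ = (n : ℝ) * Real.log ρ := by rw [Real.log_pow]
      have h2 : α n * ((n : ℝ) * δ) ≤ α n * (-Real.log (∑ y ∈ A n, prodP p y)) := by
        apply mul_le_mul_of_nonneg_left _ (hα0 n)
        rw [hδ]
        nlinarith
      calc α n * ((n : ℝ) * δ) - 1 ≤ α n * (-Real.log (∑ y ∈ A n, prodP p y)) - 1 := by linarith
        _ ≤ Dn n := hdb
  -- success probability identity
  have hsucc : ∀ n, 1 - (((2 : ℝ) ^ m n)⁻¹ *
      ∑ b : Fin (m n) → Bool, ∑ y : Fin n → Bool, (if φ n y = b then 0 else f n b y)) =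
      ∑ y : Fin n → Bool, ((2 : ℝ) ^ m n)⁻¹ * f n (φ n y) y := by
    intro n
    have e1 : ∀ (b : Fin (m n) → Bool) (y : Fin n → Bool),
        (if φ n y = b then 0 else f n b y) = f n b y - (if φ n y = b then f n b y else 0) := by
      intro b y
      by_cases h : φ n y = b <;> simp [h]
    have e2 : ∑ b : Fin (m n) → Bool, ∑ y : Fin n → Bool, (if φ n y = b then 0 else f n b y) =
        (2 : ℝ) ^ m n - ∑ y : Fin n → Bool, f n (φ n y) y := by
      simp_rw [e1, Finset.sum_sub_distrib]
      congr 1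
      · rw [Finset.sum_congr rfl fun b _ => hf1 n b, Finset.sum_const, hcard n]
        simp
      · rw [Finset.sum_comm]
        apply Finset.sum_congr rfl
        intro y _
        rw [Finset.sum_ite_eq]
        simp
    rw [e2, ← Finset.mul_sum]
    have h2m : ((2:ℝ) ^ m n) ≠ 0 := by positivity
    field_simp
    ring
  -- the key bound
  have hbnd : ∀ n, 1 - (((2 : ℝ) ^ m n)⁻¹ *
      ∑ b : Fin (m n) → Bool, ∑ y : Fin n → Bool, (if φ n y = b then 0 else f n b y)) ≤
      α n + Real.exp ((n : ℝ) * c - (m n : ℝ) * Real.log 2) := by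
    intro n
    rw [hsucc n, ← Finset.sum_add_sum_compl (A n)
      (fun y => ((2 : ℝ) ^ m n)⁻¹ * f n (φ n y) y)]
    have hb1 : ∑ y ∈ A n, ((2 : ℝ) ^ m n)⁻¹ * f n (φ n y) y ≤ α n := by
      rw [hα]
      apply Finset.sum_le_sum
      intro y _
      rw [hP]
      apply mul_le_mul_of_nonneg_left _ (by positivity)
      exact Finset.single_le_sum (fun b _ => hf0 n b y) (Finset.mem_univ (φ n y))
    have hb2 : ∑ y ∈ (A n)ᶜ, ((2 : ℝ) ^ m n)⁻¹ * f n (φ n y) y ≤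
        Real.exp ((n : ℝ) * c - (m n : ℝ) * Real.log 2) := by
      have hfle1 : ∀ b y, f n b y ≤ 1 := by
        intro b y
        rw [← hf1 n b]
        exact Finset.single_le_sum (fun y' _ => hf0 n b y') (Finset.mem_univ y)
      have hQlb : ∀ y ∈ (A n)ᶜ, (1:ℝ) ≤ prodP p y * Real.exp ((n : ℝ) * c) := by
        intro y hy
        rw [Finset.mem_compl, hA, Finset.mem_filter] at hy
        have hnotin : ¬ ((n : ℝ) * c < ∑ i, (if y i then la else lb)) := by
          intro hcon
          exact hy ⟨Finset.mem_univ y, hcon⟩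
        push_neg at hnotin
        rw [prodP_eq_exp hp0 hp1, ← hla, ← hlb, ← Real.exp_add]
        apply Real.one_le_exp
        linarith
      calc ∑ y ∈ (A n)ᶜ, ((2 : ℝ) ^ m n)⁻¹ * f n (φ n y) y
          ≤ ∑ y ∈ (A n)ᶜ, ((2 : ℝ) ^ m n)⁻¹ * (prodP p y * Real.exp ((n : ℝ) * c)) := by
            apply Finset.sum_le_sum
            intro y hy
            apply mul_le_mul_of_nonneg_left _ (by positivity)
            calc f n (φ n y) y ≤ 1 := hfle1 _ y
              _ ≤ prodP p y * Real.exp ((n : ℝ) * c) := hQlb y hy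
        _ = ((2 : ℝ) ^ m n)⁻¹ * Real.exp ((n : ℝ) * c) * ∑ y ∈ (A n)ᶜ, prodP p y := by
            rw [Finset.mul_sum]
            apply Finset.sum_congr rfl
            intro y _
            ring
        _ ≤ ((2 : ℝ) ^ m n)⁻¹ * Real.exp ((n : ℝ) * c) * 1 := by
            apply mul_le_mul_of_nonneg_left _ (by positivity)
            rw [← prodP_sum_one (p := p) (n := n)]
            apply Finset.sum_le_sum_of_subset_of_nonneg (Finset.subset_univ _)
            intro y _ _
            exact (prodP_pos hp0 hp1 y).le
        _ = Real.exp ((n : ℝ) * c - (m n : ℝ) * Real.log 2) := by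
            have h2m : Real.exp ((m n : ℝ) * Real.log 2) = (2:ℝ) ^ m n := by
              rw [Real.exp_nat_mul, Real.exp_log two_pos]
            rw [mul_one, Real.exp_sub, h2m, div_eq_mul_inv, mul_comm]
    linarith
  -- α tends to 0
  have hDdiv : ∀ n, Dn n = Real.log 2 * ∑ y : Fin n → Bool,
      P n y * Real.logb 2 (P n y / prodP p y) := by
    intro n
    rw [hDn, Finset.mul_sum]
    apply Finset.sum_congr rfl
    intro y _
    rw [Real.logb]
    field_simp
  have hαtend : Tendsto α atTop (nhds 0) := by
    have hub : Tendsto (fun n : ℕ => (Real.log 2 *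
        ((∑ y : Fin n → Bool, P n y * Real.logb 2 (P n y / prodP p y)) / n) + 1 / n) * δ⁻¹)
        atTop (nhds 0) := by
      have h1 := (hdiv.const_mul (Real.log 2)).add tendsto_one_div_atTop_nhds_zero_nat
      have h2 := h1.mul_const δ⁻¹
      simpa using h2
    apply tendsto_of_tendsto_of_tendsto_of_le_of_le' tendsto_const_nhds hub
    · exact Eventually.of_forall hα0
    · filter_upwards [eventually_ge_atTop 1] with n hn
      have hn0 : (0:ℝ) < n := by exact_mod_cast hn
      have h1 := hDlb n
      rw [hDdiv n] at h1
      calc α n ≤ (Real.log 2 * (∑ y : Fin n → Bool,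
            P n y * Real.logb 2 (P n y / prodP p y)) + 1) / ((n:ℝ) * δ) := by
            rw [le_div_iff₀ (by positivity)]
            linarith
        _ = (Real.log 2 * ((∑ y : Fin n → Bool,
            P n y * Real.logb 2 (P n y / prodP p y)) / (n:ℝ)) + 1 / (n:ℝ)) * δ⁻¹ := by
            field_simp
  have hvtend : Tendsto (fun n : ℕ => Real.exp ((n:ℝ) * c - (m n : ℝ) * Real.log 2))
      atTop (nhds 0) := by
    have hlim : Tendsto (fun n : ℕ => c - ((m n : ℝ) / (n:ℝ)) * Real.log 2) atTop
        (nhds (c - R * Real.log 2)) := tendsto_const_nhds.sub (hrate.mul_const _)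
    have hneg : c - R * Real.log 2 < 0 := by
      rw [hc, hε]
      nlinarith
    have h2 : Tendsto (fun n : ℕ => (n : ℝ) * (c - ((m n : ℝ) / (n:ℝ)) * Real.log 2))
        atTop atBot := Tendsto.atTop_mul_neg hneg tendsto_natCast_atTop_atTop hlim
    have h3 : Tendsto (fun n : ℕ => (n:ℝ) * c - (m n : ℝ) * Real.log 2) atTop atBot := by
      apply h2.congr'
      filter_upwards [eventually_ge_atTop 1] with n hn
      have hn0 : (n:ℝ) ≠ 0 := by
        have : (0:ℝ) < n := by exact_mod_cast hn
        linarith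
      field_simp
    exact Real.tendsto_exp_atBot.comp h3
  have herrtend : Tendsto (fun n => 1 - (((2 : ℝ) ^ m n)⁻¹ *
      ∑ b : Fin (m n) → Bool, ∑ y : Fin n → Bool, (if φ n y = b then 0 else f n b y)))
      atTop (nhds 1) := by
    simpa using herr.const_sub 1
  have hfinal : (1:ℝ) ≤ 0 + 0 :=
    le_of_tendsto_of_tendsto' herrtend (hαtend.add hvtend) hbnd
  norm_num at hfinal
end

section
/- (Zero-error achievability, Proposition 2.) For every binary target distribution P_Y there exist a sequence of input lengths m(n) and injective encoders f_n : {0,1}^{m(n)} → {0,1}^n such that, with P_{Ỹ^n} the uniform distribution on the image of f_n: (1) m(n)/n → H(P_Y) as n → ∞, (2) D(P_{Ỹ^n} ‖ P_Y^n)/n → 0 as n → ∞, and (3) the decoder φ_n = f_n^{−1} (on the image) recovers the input with error probability exactly 0 for every n. -/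
open Filter

/-- The uniform distribution on the image of an injective encoder
`f : {0,1}^m → {0,1}^n`, evaluated at `y`:
`P_{Ỹ^n}(y) = 2^{-m}` if `y` is in the image of `f`, and `0` otherwise. -/
noncomputable def imgUnif {m n : ℕ} (f : (Fin m → Bool) → (Fin n → Bool))
    (y : Fin n → Bool) : ℝ :=
  ∑ b : Fin m → Bool, (if f b = y then ((2 : ℝ) ^ m)⁻¹ else 0)

section ZEAaux
open Real Finset


lemma step_up {n k j : ℕ} (hk : k ≤ n) (hj : j + 1 ≤ k) :
    n.choose j * k ^ j * (n - k) ^ (n - j) ≤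
      n.choose (j+1) * k ^ (j+1) * (n - k) ^ (n - (j+1)) := by
  have h1 : n - j = (n - (j+1)) + 1 := by omega
  apply Nat.le_of_mul_le_mul_right _ (Nat.succ_pos j)
  have hch : n.choose (j+1) * (j+1) = n.choose j * (n - j) := Nat.choose_succ_right_eq n j
  calc n.choose j * k ^ j * (n - k) ^ (n - j) * (j+1)
      = (n.choose j * k ^ j * (n - k) ^ (n - (j+1))) * ((n - k) * (j+1)) := by
        rw [h1, pow_succ]; ring
    _ ≤ (n.choose j * k ^ j * (n - k) ^ (n - (j+1))) * ((n - j) * k) :=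
        Nat.mul_le_mul_left _ (Nat.mul_le_mul (by omega) hj)
    _ = (n.choose j * (n - j)) * (k ^ j * k * (n - k) ^ (n - (j+1))) := by ring
    _ = (n.choose (j+1) * (j+1)) * (k ^ j * k * (n - k) ^ (n - (j+1))) := by rw [hch]
    _ = n.choose (j+1) * k ^ (j+1) * (n - k) ^ (n - (j+1)) * (j+1) := by rw [pow_succ]; ring

lemma step_down {n k j : ℕ} (hkj : k ≤ j) (hjn : j < n) :
    n.choose (j+1) * k ^ (j+1) * (n - k) ^ (n - (j+1)) ≤
      n.choose j * k ^ j * (n - k) ^ (n - j) := by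
  have h1 : n - j = (n - (j+1)) + 1 := by omega
  apply Nat.le_of_mul_le_mul_right _ (Nat.succ_pos j)
  have hch : n.choose (j+1) * (j+1) = n.choose j * (n - j) := Nat.choose_succ_right_eq n j
  calc n.choose (j+1) * k ^ (j+1) * (n - k) ^ (n - (j+1)) * (j+1)
      = (n.choose (j+1) * (j+1)) * (k ^ j * k * (n - k) ^ (n - (j+1))) := by rw [pow_succ]; ring
    _ = (n.choose j * (n - j)) * (k ^ j * k * (n - k) ^ (n - (j+1))) := by rw [hch]
    _ = (n.choose j * k ^ j * (n - k) ^ (n - (j+1))) * ((n - j) * k) := by ring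
    _ ≤ (n.choose j * k ^ j * (n - k) ^ (n - (j+1))) * ((n - k) * (j+1)) :=
        Nat.mul_le_mul_left _ (Nat.mul_le_mul (by omega) (by omega))
    _ = n.choose j * k ^ j * (n - k) ^ (n - j) * (j+1) := by rw [h1, pow_succ]; ring

lemma up_aux {n k : ℕ} (hk : k ≤ n) : ∀ d j, j + d = k →
    n.choose j * k ^ j * (n - k) ^ (n - j) ≤ n.choose k * k ^ k * (n - k) ^ (n - k)
  | 0, j, h => by subst h; exact le_rfl
  | d+1, j, h => le_trans (step_up hk (by omega)) (up_aux hk d (j+1) (by omega))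

lemma down_aux {n k : ℕ} (hk : k ≤ n) : ∀ d j, k + d = j → j ≤ n →
    n.choose j * k ^ j * (n - k) ^ (n - j) ≤ n.choose k * k ^ k * (n - k) ^ (n - k)
  | 0, j, h, _ => by subst h; exact le_rfl
  | d+1, j, h, hjn => by
      have h1 : j = (k+d)+1 := by omega
      subst h1
      exact le_trans (step_down (by omega) (by omega)) (down_aux hk d (k+d) rfl (by omega))

lemma nat_max_term {n k : ℕ} (hk : k ≤ n) : ∀ j ≤ n,
    n.choose j * k ^ j * (n - k) ^ (n - j) ≤ n.choose k * k ^ k * (n - k) ^ (n - k) := by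
  intro j hj
  rcases le_or_gt j k with h | h
  · exact up_aux hk (k - j) j (by omega)
  · exact down_aux hk (j - k) j (by omega) hj


lemma term_le_one (n k : ℕ) (hk : k ≤ n) {q : ℝ} (h0 : 0 ≤ q) (h1 : q ≤ 1) :
    (n.choose k : ℝ) * q ^ k * (1 - q) ^ (n - k) ≤ 1 := by
  have hb := add_pow q (1 - q) n
  rw [add_sub_cancel, one_pow] at hb
  calc (n.choose k : ℝ) * q ^ k * (1 - q) ^ (n - k)
      = q ^ k * (1 - q) ^ (n - k) * (n.choose k : ℝ) := by ring
    _ ≤ ∑ i ∈ Finset.range (n + 1), q ^ i * (1 - q) ^ (n - i) * (n.choose i : ℝ) := by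
        apply Finset.single_le_sum (f := fun i => q ^ i * (1 - q) ^ (n - i) * (n.choose i : ℝ))
        · intro i _
          have h2 : (0:ℝ) ≤ 1 - q := by linarith
          positivity
        · simpa using Nat.lt_succ_of_le hk
    _ = 1 := hb.symm

lemma t_eq (n k j : ℕ) (hn : 0 < n) (hk : k ≤ n) (hj : j ≤ n) :
    (n.choose j : ℝ) * ((k : ℝ) / n) ^ j * (1 - (k : ℝ) / n) ^ (n - j)
      = ((n.choose j * k ^ j * (n - k) ^ (n - j) : ℕ) : ℝ) / (n : ℝ) ^ n := by
  have hn' : (n : ℝ) ≠ 0 := Nat.cast_ne_zero.2 hn.ne'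
  have h1q : 1 - (k : ℝ) / n = ((n - k : ℕ) : ℝ) / n := by
    rw [Nat.cast_sub hk]; field_simp
  have e1 : (n : ℝ) ^ j * (n : ℝ) ^ (n - j) = (n : ℝ) ^ n := by
    rw [← pow_add]; congr 1; omega
  rw [h1q, div_pow, div_pow]
  push_cast
  rw [eq_div_iff (show ((n:ℝ) ^ n) ≠ 0 by positivity), ← e1]
  field_simp

lemma one_le_max (n k : ℕ) (hn : 0 < n) (hk : k ≤ n) :
    1 ≤ (n + 1 : ℝ) * ((n.choose k : ℝ) * ((k : ℝ) / n) ^ k * (1 - (k : ℝ) / n) ^ (n - k)) := by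
  set q : ℝ := (k : ℝ) / n with hq
  have hb := add_pow q (1 - q) n
  rw [add_sub_cancel, one_pow] at hb
  have hle : ∀ j ∈ Finset.range (n + 1),
      q ^ j * (1 - q) ^ (n - j) * (n.choose j : ℝ)
        ≤ (n.choose k : ℝ) * q ^ k * (1 - q) ^ (n - k) := by
    intro j hj
    have hj' : j ≤ n := Nat.lt_succ_iff.1 (Finset.mem_range.1 hj)
    rw [show q ^ j * (1 - q) ^ (n - j) * (n.choose j : ℝ)
        = (n.choose j : ℝ) * q ^ j * (1 - q) ^ (n - j) by ring]
    rw [hq, t_eq n k j hn hk hj', t_eq n k k hn hk hk]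
    apply div_le_div_of_nonneg_right ?_ (by positivity)
    exact_mod_cast nat_max_term hk j hj'
  calc (1 : ℝ) = ∑ j ∈ Finset.range (n + 1), q ^ j * (1 - q) ^ (n - j) * (n.choose j : ℝ) := hb
    _ ≤ ∑ _j ∈ Finset.range (n + 1), (n.choose k : ℝ) * q ^ k * (1 - q) ^ (n - k) :=
        Finset.sum_le_sum hle
    _ = (n + 1 : ℝ) * ((n.choose k : ℝ) * q ^ k * (1 - q) ^ (n - k)) := by
        rw [Finset.sum_const, Finset.card_range]; push_cast [nsmul_eq_mul]; ring



lemma binEnt_contAt (p : ℝ) (hp0 : 0 < p) (hp1 : p < 1) : ContinuousAt binEnt p := by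
  have h1 : ContinuousAt (fun q : ℝ => Real.logb 2 q) p :=
    (Real.continuousAt_log hp0.ne').div_const _
  have h2 : ContinuousAt (fun q : ℝ => Real.logb 2 (1 - q)) p := by
    have : ContinuousAt (fun q : ℝ => Real.log (1 - q)) p :=
      (Real.continuousAt_log (by linarith)).comp (by fun_prop)
    exact this.div_const _
  unfold binEnt
  exact (((continuousAt_id).mul h1).neg).sub ((by fun_prop : ContinuousAt (fun q : ℝ => 1 - q) p).mul h2)

lemma floor_div_tendsto (p : ℝ) (hp0 : 0 < p) :
    Tendsto (fun n : ℕ => ((⌊p * n⌋₊ : ℝ) / n)) atTop (nhds p) := by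
  have hlow : Tendsto (fun n : ℕ => p - 1 / (n : ℝ)) atTop (nhds p) := by
    simpa using tendsto_const_nhds.sub (tendsto_one_div_atTop_nhds_zero_nat (𝕜 := ℝ))
  apply tendsto_of_tendsto_of_tendsto_of_le_of_le' hlow tendsto_const_nhds
  · filter_upwards [eventually_ge_atTop 1] with n hn
    have hn0 : (0:ℝ) < n := by exact_mod_cast hn
    have h1 : p * n - 1 < (⌊p * n⌋₊ : ℝ) := Nat.sub_one_lt_floor _
    rw [le_div_iff₀ hn0]
    have hexp : (p - 1 / (n:ℝ)) * n = p * n - 1 := by field_simp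
    linarith
  · filter_upwards [eventually_ge_atTop 1] with n hn
    have hn0 : (0:ℝ) < n := by exact_mod_cast hn
    rw [div_le_iff₀ hn0]
    exact Nat.floor_le (by positivity)

lemma logb_succ_div_tendsto : Tendsto (fun n : ℕ => Real.logb 2 (n + 1) / n) atTop (nhds 0) := by
  have h1 : Tendsto (fun x : ℝ => Real.log x / x) atTop (nhds 0) :=
    Real.isLittleO_log_id_atTop.tendsto_div_nhds_zero
  have h2 : Tendsto (fun n : ℕ => ((n : ℝ) + 1)) atTop atTop := by
    apply tendsto_atTop_add_const_right
    exact tendsto_natCast_atTop_atTop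
  have h3 : Tendsto (fun n : ℕ => Real.log (n + 1) / (n + 1)) atTop (nhds 0) := h1.comp h2
  have h4 : Tendsto (fun n : ℕ => ((n : ℝ) + 1) / n) atTop (nhds 1) := by
    have h5 := Tendsto.add (tendsto_const_nhds (x := (1:ℝ))) (tendsto_one_div_atTop_nhds_zero_nat)
    rw [add_zero] at h5
    apply Tendsto.congr' _ h5
    filter_upwards [eventually_ge_atTop 1] with n hn
    have hn0 : (0:ℝ) < n := by exact_mod_cast hn
    field_simp
  have h6 : Tendsto (fun n : ℕ => Real.log (n + 1) / n) atTop (nhds 0) := by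
    have := h3.mul h4
    rw [mul_one] at this
    apply this.congr'
    filter_upwards [eventually_ge_atTop 1] with n hn
    have hn0 : (0:ℝ) < n := by exact_mod_cast hn
    field_simp
  have h7 := h6.div_const (Real.log 2)
  rw [zero_div] at h7
  apply h7.congr
  intro n
  rw [Real.logb, div_div, div_div, mul_comm]


lemma nBinEnt (n k : ℕ) (hn : 0 < n) (hk : k ≤ n) :
    (n : ℝ) * binEnt ((k : ℝ) / n) =
      -((k : ℝ) * Real.logb 2 ((k : ℝ) / n)) -
        ((n - k : ℕ) : ℝ) * Real.logb 2 (1 - (k : ℝ) / n) := by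
  have hn' : (n : ℝ) ≠ 0 := Nat.cast_ne_zero.2 hn.ne'
  unfold binEnt
  rw [Nat.cast_sub hk]
  field_simp

lemma logb_term_eq (n k : ℕ) (hn : 0 < n) (hk1 : 1 ≤ k) (hk2 : k < n) :
    Real.logb 2 ((n.choose k : ℝ) * ((k:ℝ)/n) ^ k * (1 - (k:ℝ)/n) ^ (n - k))
      = Real.logb 2 (n.choose k : ℝ) - (n : ℝ) * binEnt ((k:ℝ)/n) := by
  have hn0 : (0:ℝ) < n := by exact_mod_cast hn
  have hq0 : (0:ℝ) < (k:ℝ)/n := by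
    apply div_pos _ hn0; exact_mod_cast hk1
  have hq1 : (k:ℝ)/n < 1 := by
    rw [div_lt_one hn0]; exact_mod_cast hk2
  have hC0 : (0:ℝ) < (n.choose k : ℝ) := by
    exact_mod_cast Nat.choose_pos (le_of_lt hk2)
  have h1q : (0:ℝ) < 1 - (k:ℝ)/n := by linarith
  rw [Real.logb_mul (by positivity) (by positivity),
      Real.logb_mul (by positivity) (by positivity),
      Real.logb_pow, Real.logb_pow, nBinEnt n k hn (le_of_lt hk2)]
  ring

lemma logb_choose_tendsto (p : ℝ) (hp0 : 0 < p) (hp1 : p < 1) :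
    Tendsto (fun n : ℕ => Real.logb 2 ((n.choose ⌊p * n⌋₊ : ℕ) : ℝ) / n)
      atTop (nhds (binEnt p)) := by
  set k : ℕ → ℕ := fun n => ⌊p * n⌋₊ with hkdef
  have hk_le : ∀ n : ℕ, k n ≤ n := by
    intro n
    have h : p * n ≤ (n : ℝ) := by nlinarith [Nat.cast_nonneg (α := ℝ) n]
    calc k n ≤ ⌊(n:ℝ)⌋₊ := Nat.floor_le_floor h
      _ = n := Nat.floor_natCast n
  have hq := floor_div_tendsto p hp0
  have hEnt : Tendsto (fun n => binEnt ((k n : ℝ)/n)) atTop (nhds (binEnt p)) :=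
    (binEnt_contAt p hp0 hp1).tendsto.comp hq
  have hev : ∀ᶠ n : ℕ in atTop, 1 ≤ k n ∧ k n < n := by
    have h1 : ∀ᶠ n : ℕ in atTop, (1:ℝ) ≤ p * n := by
      have h2 : Tendsto (fun n : ℕ => p * n) atTop atTop :=
        (tendsto_natCast_atTop_atTop (R := ℝ)).const_mul_atTop hp0
      exact h2.eventually_ge_atTop 1
    filter_upwards [h1, eventually_ge_atTop 1] with n hn1 hn2
    have hn0 : (0:ℝ) < n := by exact_mod_cast hn2
    constructor
    · exact Nat.le_floor (by exact_mod_cast hn1)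
    · exact (Nat.floor_lt (by positivity)).2 (by nlinarith)
  have hlow : Tendsto (fun n : ℕ => binEnt ((k n : ℝ)/n) - Real.logb 2 (n + 1) / n)
      atTop (nhds (binEnt p)) := by
    have := hEnt.sub logb_succ_div_tendsto
    rwa [sub_zero] at this
  apply tendsto_of_tendsto_of_tendsto_of_le_of_le' hlow hEnt
  · -- lower bound
    filter_upwards [hev, eventually_ge_atTop 1] with n hn hn1
    obtain ⟨hk1, hk2⟩ := hn
    have hn0 : (0:ℝ) < n := by exact_mod_cast hn1
    have hX := one_le_max n (k n) hn1 (hk_le n)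
    have hXpos : (0:ℝ) < (n.choose (k n) : ℝ) * ((k n:ℝ)/n) ^ (k n) * (1 - (k n:ℝ)/n) ^ (n - k n) := by
      have hq0 : (0:ℝ) < (k n:ℝ)/n := div_pos (by exact_mod_cast hk1) hn0
      have hq1 : (k n:ℝ)/n < 1 := by rw [div_lt_one hn0]; exact_mod_cast hk2
      have hC0 : (0:ℝ) < (n.choose (k n) : ℝ) := by exact_mod_cast Nat.choose_pos (hk_le n)
      have h1q : (0:ℝ) < 1 - (k n:ℝ)/n := by linarith
      positivity
    have h0 : (0:ℝ) ≤ Real.logb 2 ((n+1 : ℝ) * ((n.choose (k n) : ℝ) * ((k n:ℝ)/n) ^ (k n) * (1 - (k n:ℝ)/n) ^ (n - k n))) :=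
      Real.logb_nonneg (by norm_num) hX
    rw [Real.logb_mul (by positivity) (ne_of_gt hXpos), logb_term_eq n (k n) hn1 hk1 hk2] at h0
    have key : (n:ℝ) * binEnt ((k n:ℝ)/n) - Real.logb 2 (n+1) ≤ Real.logb 2 (n.choose (k n) : ℝ) := by
      linarith
    show binEnt ((k n:ℝ)/n) - Real.logb 2 (n+1) / n ≤ Real.logb 2 ((n.choose (k n) : ℕ) : ℝ) / n
    rw [sub_le_iff_le_add, ← add_div, le_div_iff₀ hn0]
    calc binEnt ((k n:ℝ)/n) * n = (n:ℝ) * binEnt ((k n:ℝ)/n) := by ring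
      _ ≤ Real.logb 2 (n.choose (k n) : ℝ) + Real.logb 2 (n+1) := by linarith
  · -- upper bound
    filter_upwards [hev, eventually_ge_atTop 1] with n hn hn1
    obtain ⟨hk1, hk2⟩ := hn
    have hn0 : (0:ℝ) < n := by exact_mod_cast hn1
    have hq0 : (0:ℝ) ≤ (k n:ℝ)/n := by positivity
    have hq1 : (k n:ℝ)/n ≤ 1 := by
      rw [div_le_one hn0]; exact_mod_cast hk_le n
    have hX := term_le_one n (k n) (hk_le n) hq0 hq1
    have hXpos : (0:ℝ) < (n.choose (k n) : ℝ) * ((k n:ℝ)/n) ^ (k n) * (1 - (k n:ℝ)/n) ^ (n - k n) := by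
      have hq0' : (0:ℝ) < (k n:ℝ)/n := div_pos (by exact_mod_cast hk1) hn0
      have hq1' : (k n:ℝ)/n < 1 := by rw [div_lt_one hn0]; exact_mod_cast hk2
      have hC0 : (0:ℝ) < (n.choose (k n) : ℝ) := by exact_mod_cast Nat.choose_pos (hk_le n)
      have h1q : (0:ℝ) < 1 - (k n:ℝ)/n := by linarith
      positivity
    have h0 : Real.logb 2 ((n.choose (k n) : ℝ) * ((k n:ℝ)/n) ^ (k n) * (1 - (k n:ℝ)/n) ^ (n - k n)) ≤ 0 :=
      Real.logb_nonpos (by norm_num) (le_of_lt hXpos) hX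
    rw [logb_term_eq n (k n) hn1 hk1 hk2] at h0
    show Real.logb 2 ((n.choose (k n) : ℕ) : ℝ) / n ≤ binEnt ((k n:ℝ)/n)
    rw [div_le_iff₀ hn0]
    calc Real.logb 2 (n.choose (k n) : ℝ) ≤ (n:ℝ) * binEnt ((k n:ℝ)/n) := by linarith
      _ = binEnt ((k n:ℝ)/n) * n := by ring


lemma natlog_div_tendsto (p : ℝ) (hp0 : 0 < p) (hp1 : p < 1)
    (hk_le : ∀ n : ℕ, ⌊p * n⌋₊ ≤ n) :
    Tendsto (fun n : ℕ => ((Nat.log 2 (n.choose ⌊p * n⌋₊) : ℝ)) / n)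
      atTop (nhds (binEnt p)) := by
  have hC := logb_choose_tendsto p hp0 hp1
  have hlow : Tendsto (fun n : ℕ => Real.logb 2 ((n.choose ⌊p * n⌋₊ : ℕ) : ℝ) / n - 1 / n)
      atTop (nhds (binEnt p)) := by
    have := hC.sub tendsto_one_div_atTop_nhds_zero_nat
    rwa [sub_zero] at this
  apply tendsto_of_tendsto_of_tendsto_of_le_of_le' hlow hC
  · filter_upwards [eventually_ge_atTop 1] with n hn1
    have hn0 : (0:ℝ) < n := by exact_mod_cast hn1
    have hCpos : 0 < n.choose ⌊p * n⌋₊ := Nat.choose_pos (hk_le n)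
    have h1 : (n.choose ⌊p * n⌋₊ : ℝ) < 2 ^ (Nat.log 2 (n.choose ⌊p * n⌋₊) + 1) := by
      exact_mod_cast Nat.lt_pow_succ_log_self (by norm_num) _
    have h2 : Real.logb 2 ((n.choose ⌊p * n⌋₊ : ℕ) : ℝ) < (Nat.log 2 (n.choose ⌊p * n⌋₊) : ℝ) + 1 := by
      have h1' : ((n.choose ⌊p * n⌋₊ : ℕ) : ℝ) < (2:ℝ) ^ (Nat.log 2 (n.choose ⌊p * n⌋₊) + 1) := by
        exact_mod_cast h1
      have := Real.logb_lt_logb (b := 2) (by norm_num) (by exact_mod_cast hCpos) h1'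
      rwa [Real.logb_pow, Real.logb_self_eq_one (by norm_num), mul_one, Nat.cast_add,
        Nat.cast_one] at this
    rw [div_sub_div_same]
    apply div_le_div_of_nonneg_right ?_ hn0.le
    linarith
  · filter_upwards [eventually_ge_atTop 1] with n hn1
    have hn0 : (0:ℝ) < n := by exact_mod_cast hn1
    have hCpos : 0 < n.choose ⌊p * n⌋₊ := Nat.choose_pos (hk_le n)
    have h3 : (2:ℝ) ^ (Nat.log 2 (n.choose ⌊p * n⌋₊)) ≤ ((n.choose ⌊p * n⌋₊ : ℕ) : ℝ) := by
      exact_mod_cast Nat.pow_log_le_self 2 hCpos.ne'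
    have h4 : ((Nat.log 2 (n.choose ⌊p * n⌋₊) : ℕ) : ℝ) ≤ Real.logb 2 ((n.choose ⌊p * n⌋₊ : ℕ) : ℝ) := by
      have := Real.logb_le_logb_of_le (b := 2) (by norm_num) (by positivity) h3
      rwa [Real.logb_pow, Real.logb_self_eq_one (by norm_num), mul_one] at this
    exact div_le_div_of_nonneg_right h4 hn0.le


lemma prodP_eq {n : ℕ} (p : ℝ) (y : Fin n → Bool) :
    prodP p y = p ^ (univ.filter (fun i => y i = true)).card
      * (1 - p) ^ (n - (univ.filter (fun i => y i = true)).card) := by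
  classical
  unfold prodP
  rw [← Finset.prod_filter_mul_prod_filter_not univ (fun i => y i = true)]
  have h1 : ∀ i ∈ univ.filter (fun i => y i = true), (if y i then p else 1 - p) = p := by
    intro i hi
    simp only [Finset.mem_filter] at hi
    simp [hi.2]
  have h2 : ∀ i ∈ univ.filter (fun i => ¬ (y i = true)), (if y i then p else 1 - p) = 1 - p := by
    intro i hi
    simp only [Finset.mem_filter] at hi
    simp [hi.2]
  rw [Finset.prod_congr rfl h1, Finset.prod_congr rfl h2, Finset.prod_const, Finset.prod_const]
  have hcard : (univ.filter (fun i => ¬ (y i = true))).card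
      = n - (univ.filter (fun i => y i = true)).card := by
    have := Finset.card_filter_add_card_filter_not
      (s := (univ : Finset (Fin n))) (p := fun i : Fin n => y i = true)
    simp only [Finset.card_univ, Fintype.card_fin] at this
    omega
  rw [hcard]

lemma div_sum_eq {m n kk : ℕ} (p : ℝ) (hp0 : 0 < p) (hp1 : p < 1)
    (f : (Fin m → Bool) → (Fin n → Bool)) (hf : Function.Injective f)
    (hw : ∀ b, prodP p (f b) = p ^ kk * (1 - p) ^ (n - kk)) :
    ∑ y : Fin n → Bool, imgUnif f y * Real.logb 2 (imgUnif f y / prodP p y)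
      = -(m : ℝ) - kk * Real.logb 2 p - ((n - kk : ℕ) : ℝ) * Real.logb 2 (1 - p) := by
  classical
  have himg : ∀ b, imgUnif f (f b) = ((2 : ℝ) ^ m)⁻¹ := by
    intro b
    unfold imgUnif
    simp [hf.eq_iff, Finset.sum_ite_eq']
  have hzero : ∀ y, y ∉ Finset.image f univ → imgUnif f y = 0 := by
    intro y hy
    unfold imgUnif
    apply Finset.sum_eq_zero
    intro b _
    have : f b ≠ y := fun h => hy (Finset.mem_image.2 ⟨b, Finset.mem_univ b, h⟩)
    simp [this]
  have hsub : ∑ y : Fin n → Bool, imgUnif f y * Real.logb 2 (imgUnif f y / prodP p y)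
      = ∑ y ∈ Finset.image f univ, imgUnif f y * Real.logb 2 (imgUnif f y / prodP p y) := by
    symm
    apply Finset.sum_subset (Finset.subset_univ _)
    intro y _ hy
    rw [hzero y hy, zero_mul]
  rw [hsub, Finset.sum_image (fun b _ b' _ h => hf h)]
  have hterm : ∀ b : Fin m → Bool,
      imgUnif f (f b) * Real.logb 2 (imgUnif f (f b) / prodP p (f b))
        = ((2 : ℝ) ^ m)⁻¹ *
          (-(m : ℝ) - kk * Real.logb 2 p - ((n - kk : ℕ) : ℝ) * Real.logb 2 (1 - p)) := by
    intro b
    rw [himg b, hw b]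
    congr 1
    have h1p : (0:ℝ) < 1 - p := by linarith
    rw [div_eq_mul_inv, mul_inv]
    rw [Real.logb_mul (by positivity) (by positivity)]
    rw [Real.logb_mul (by positivity) (by positivity)]
    simp only [Real.logb_inv, Real.logb_pow]
    rw [Real.logb_self_eq_one (by norm_num)]
    push_cast
    ring
  rw [Finset.sum_congr rfl (fun b _ => hterm b), Finset.sum_const]
  simp only [Finset.card_univ, Fintype.card_fun, Fintype.card_bool, Fintype.card_fin]
  rw [nsmul_eq_mul]
  push_cast
  rw [← mul_assoc, mul_inv_cancel₀ (by positivity), one_mul]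

end ZEAaux

/-- **Zero-error achievability (Proposition 2).** For every binary target
distribution `P_Y` (`P_Y(1) = p`, `0 < p < 1`) there exist input lengths `m n`
and injective encoders `f n : {0,1}^{m n} → {0,1}^n` such that, with `P_{Ỹ^n}`
the uniform distribution on the image of `f n`:
(1) `m n / n → H(P_Y)` as `n → ∞`,
(2) `D(P_{Ỹ^n} ‖ P_Y^n) / n → 0` as `n → ∞`, and
(3) there is a decoder `φ` inverting `f n` on its image, so the input is
recovered with error probability exactly `0` for every `n`. -/
theorem zero_error_achievability (p : ℝ) (hp0 : 0 < p) (hp1 : p < 1) :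
    ∃ (m : ℕ → ℕ) (f : ∀ n, (Fin (m n) → Bool) → (Fin n → Bool)),
      (∀ n, Function.Injective (f n)) ∧
      Tendsto (fun n => (m n : ℝ) / n) atTop (nhds (binEnt p)) ∧
      Tendsto (fun n =>
          (∑ y : Fin n → Bool,
            imgUnif (f n) y * Real.logb 2 (imgUnif (f n) y / prodP p y)) / n)
        atTop (nhds 0) ∧
      (∀ n, ∃ φ : (Fin n → Bool) → (Fin (m n) → Bool),
        ∀ b : Fin (m n) → Bool, φ (f n b) = b) := by
  classical
  set k : ℕ → ℕ := fun n => ⌊p * n⌋₊ with hkdef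
  have hk_le : ∀ n : ℕ, k n ≤ n := by
    intro n
    have h : p * n ≤ (n : ℝ) := by nlinarith [Nat.cast_nonneg (α := ℝ) n]
    calc k n ≤ ⌊(n:ℝ)⌋₊ := Nat.floor_le_floor h
      _ = n := Nat.floor_natCast n
  set m : ℕ → ℕ := fun n => Nat.log 2 (n.choose (k n)) with hmdef
  -- embeddings into constant-weight sets
  have hcard : ∀ n : ℕ, Fintype.card (Fin (m n) → Bool)
      ≤ Fintype.card {s : Finset (Fin n) // s.card = k n} := by
    intro n
    rw [Fintype.card_finset_len]
    simp only [Fintype.card_fun, Fintype.card_bool, Fintype.card_fin]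
    exact Nat.pow_log_le_self 2 (Nat.choose_pos (hk_le n)).ne'
  have hemb : ∀ n : ℕ, Nonempty ((Fin (m n) → Bool) ↪ {s : Finset (Fin n) // s.card = k n}) :=
    fun n => Function.Embedding.nonempty_of_card_le (hcard n)
  set e : ∀ n : ℕ, (Fin (m n) → Bool) ↪ {s : Finset (Fin n) // s.card = k n} :=
    fun n => (hemb n).some with hedef
  set f : ∀ n : ℕ, (Fin (m n) → Bool) → (Fin n → Bool) :=
    fun n b => fun i => decide (i ∈ ((e n) b).val) with hfdef
  have hfi : ∀ n, Function.Injective (f n) := by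
    intro n b b' h
    apply (e n).injective
    apply Subtype.ext
    apply Finset.ext
    intro i
    have := congrFun h i
    simpa [hfdef, decide_eq_decide] using this
  have hwt : ∀ n b, (Finset.univ.filter (fun i => f n b i = true)).card = k n := by
    intro n b
    have : Finset.univ.filter (fun i => f n b i = true) = ((e n) b).val := by
      apply Finset.ext
      intro i
      simp [hfdef]
    rw [this]
    exact ((e n) b).2
  have hprod : ∀ n b, prodP p (f n b) = p ^ (k n) * (1 - p) ^ (n - k n) := by
    intro n b
    rw [prodP_eq p (f n b), hwt n b]
  refine ⟨m, f, hfi, ?_, ?_, ?_⟩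
  · exact natlog_div_tendsto p hp0 hp1 hk_le
  · -- divergence
    have hA := natlog_div_tendsto p hp0 hp1 hk_le
    have hB := floor_div_tendsto p hp0
    have hC' : Tendsto (fun n : ℕ => ((n - k n : ℕ) : ℝ) / n) atTop (nhds (1 - p)) := by
      have h1 : Tendsto (fun n : ℕ => 1 - (k n : ℝ) / n) atTop (nhds (1 - p)) :=
        tendsto_const_nhds.sub hB
      apply h1.congr'
      filter_upwards [eventually_ge_atTop 1] with n hn1
      have hn0 : (0:ℝ) < n := by exact_mod_cast hn1
      rw [Nat.cast_sub (hk_le n)]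
      field_simp
    have hD : Tendsto (fun n : ℕ =>
        -((m n : ℝ) / n) - ((k n : ℝ) / n) * Real.logb 2 p
          - (((n - k n : ℕ) : ℝ) / n) * Real.logb 2 (1 - p)) atTop
        (nhds (-(binEnt p) - p * Real.logb 2 p - (1 - p) * Real.logb 2 (1 - p))) :=
      ((hA.neg).sub (hB.mul_const _)).sub (hC'.mul_const _)
    have hval : -(binEnt p) - p * Real.logb 2 p - (1 - p) * Real.logb 2 (1 - p) = 0 := by
      unfold binEnt; ring
    rw [hval] at hD
    apply hD.congr
    intro n
    rw [div_sum_eq p hp0 hp1 (f n) (hfi n) (hprod n)]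
    ring
  · intro n
    refine ⟨Function.invFun (f n), fun b => Function.leftInverse_invFun (hfi n) b⟩
end
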